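/- Let s₁, t₁, s₂, t₂ ∈ ℝ^{4,2} be lightlike vectors, and suppose u₁, u₂, u₃ ∈ ℝ^{4,2} span a 3-dimensional subspace such that ⟨u_k, s_i + ⟨s_i,p⟩p⟩ = 0 and ⟨u_k, t_i + ⟨t_i,p⟩p⟩ = 0 for all k ∈ {1,2,3} and i ∈ {1,2} (three generic curvature spheres orthogonal to the two circles determined by (s₁,t₁) and (s₂,t₂)). Then dim span{s₁, s₂, t₁, t₂, p} ≤ 4. (Key step of the theorem: a discrete circle congruence admitting three generic orthogonal discrete Legendre maps has cospherical adjacent circles, hence is cyclic.) -/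

import Mathlib

noncomputable section

/-- The vector space ℝ^{4,2}, modeled as `Fin 6 → ℝ`. -/
abbrev R42 : Type := Fin 6 → ℝ

/-- The symmetric bilinear form of signature (4,2) on ℝ^{4,2}. -/
def bform : R42 →ₗ[ℝ] R42 →ₗ[ℝ] ℝ :=
  LinearMap.mk₂ ℝ
    (fun x y => x 0 * y 0 + x 1 * y 1 + x 2 * y 2 + x 3 * y 3 - x 4 * y 4 - x 5 * y 5)
    (fun x x' y => by simp only [Pi.add_apply]; ring)
    (fun c x y => by simp only [Pi.smul_apply, smul_eq_mul]; ring)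
    (fun x y y' => by simp only [Pi.add_apply]; ring)
    (fun c x y => by simp only [Pi.smul_apply, smul_eq_mul]; ring)

/-- A lightlike vector: nonzero and isotropic. Represents an oriented 2-sphere. -/
def IsLightlike (v : R42) : Prop := v ≠ 0 ∧ bform v v = 0

/-- The Lie inversion with respect to the linear sphere complex determined by `a`. -/
def lieInv (a r : R42) : R42 := r - (2 * bform r a / bform a a) • a

/-! The spheres `s + ⟨s,p⟩p` lie in the orthogonal complement `N` of the span of `u₁, u₂, u₃`,
which is 3-dimensional because the form is nondegenerate on the 6-dimensional space.
So each of `s₁, t₁, s₂, t₂` lies in `N ⊔ ℝ∙p`, which is at most 4-dimensional. -/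

theorem bform_symm (x y : R42) : bform x y = bform y x := by
  simp only [bform, LinearMap.mk₂_apply]; ring

theorem bform_nondegenerate : (bform : LinearMap.BilinForm ℝ R42).Nondegenerate := by
  refine (LinearMap.IsRefl.nondegenerate_iff_separatingLeft
    fun x y h => (bform_symm x y).symm ▸ h).mpr fun x hx => funext fun i => ?_
  have hi := hx (Pi.single i 1)
  fin_cases i <;> simpa [bform] using hi

theorem finrank_bform_orthogonal (U : Submodule ℝ R42) :
    Module.finrank ℝ (LinearMap.BilinForm.orthogonal bform U) = 6 - Module.finrank ℝ U := by
  simp [LinearMap.BilinForm.finrank_orthogonal bform_nondegenerate]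

theorem LinearMap.BilinForm.mem_orthogonal_span_iff {R M : Type*} [CommRing R] [AddCommGroup M]
    [Module R M] (B : LinearMap.BilinForm R M) {S : Set M} {m : M} :
    m ∈ B.orthogonal (Submodule.span R S) ↔ ∀ n ∈ S, B n m = 0 :=
  show Submodule.span R S ≤ LinearMap.ker (B.flip m) ↔ _ from Submodule.span_le

namespace Submodule

variable {K V : Type*} [Field K] [AddCommGroup V] [Module K V]

theorem mem_sup_span_singleton_of_add_smul_mem {N : Submodule K V} {x p : V} {c : K}
    (h : x + c • p ∈ N) : x ∈ N ⊔ K ∙ p :=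
  mem_sup.2 ⟨x + c • p, h, -c • p, smul_mem _ _ (mem_span_singleton_self p), by
    rw [neg_smul, add_neg_cancel_right]⟩

theorem finrank_le_finrank_add_one_of_le_sup_span_singleton [FiniteDimensional K V]
    {W N : Submodule K V} {p : V} (h : W ≤ N ⊔ K ∙ p) :
    Module.finrank K W ≤ Module.finrank K N + 1 := by
  have hp : Module.finrank K (K ∙ p) ≤ 1 := by
    simpa using finrank_span_le_card ({p} : Set V)
  have := finrank_add_le_finrank_add_finrank N (K ∙ p)
  have := finrank_mono h
  omega

end Submodule

theorem stmt_13_general (p s₁ t₁ s₂ t₂ u₁ u₂ u₃ : R42)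
    (hdim : Module.finrank ℝ (Submodule.span ℝ ({u₁, u₂, u₃} : Set R42)) = 3)
    (horth : ∀ u ∈ ({u₁, u₂, u₃} : Set R42),
      bform u (s₁ + bform s₁ p • p) = 0 ∧
      bform u (t₁ + bform t₁ p • p) = 0 ∧
      bform u (s₂ + bform s₂ p • p) = 0 ∧
      bform u (t₂ + bform t₂ p • p) = 0) :
    Module.finrank ℝ (Submodule.span ℝ ({s₁, s₂, t₁, t₂, p} : Set R42)) ≤ 4 := by
  set N := LinearMap.BilinForm.orthogonal bform (Submodule.span ℝ ({u₁, u₂, u₃} : Set R42))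
  have hN : Module.finrank ℝ N = 3 := by rw [finrank_bform_orthogonal, hdim]
  have hcircle : ∀ s : R42, (∀ u ∈ ({u₁, u₂, u₃} : Set R42), bform u (s + bform s p • p) = 0) →
      s ∈ N ⊔ ℝ ∙ p := fun s hs =>
    Submodule.mem_sup_span_singleton_of_add_smul_mem
      ((LinearMap.BilinForm.mem_orthogonal_span_iff _).2 hs)
  have hspan : Submodule.span ℝ ({s₁, s₂, t₁, t₂, p} : Set R42) ≤ N ⊔ ℝ ∙ p := by
    rw [Submodule.span_le]
    rintro x (rfl | rfl | rfl | rfl | rfl)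
    · exact hcircle _ fun u hu => (horth u hu).1
    · exact hcircle _ fun u hu => (horth u hu).2.2.1
    · exact hcircle _ fun u hu => (horth u hu).2.1
    · exact hcircle _ fun u hu => (horth u hu).2.2.2
    · exact Submodule.mem_sup_right (Submodule.mem_span_singleton_self x)
  have := Submodule.finrank_le_finrank_add_one_of_le_sup_span_singleton hspan
  omega

/-- If three generic curvature spheres `u₁, u₂, u₃` (spanning a
3-dimensional subspace) are orthogonal to the two circles determined by the sphere
pairs `(s₁,t₁)` and `(s₂,t₂)`, then `span {s₁, s₂, t₁, t₂, p}` is at most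
4-dimensional: adjacent circles of a circle congruence admitting three generic
orthogonal discrete Legendre maps are cospherical. -/
theorem stmt_13 (p s₁ t₁ s₂ t₂ u₁ u₂ u₃ : R42)
    (hp : bform p p = -1)
    (hs₁ : IsLightlike s₁) (ht₁ : IsLightlike t₁)
    (hs₂ : IsLightlike s₂) (ht₂ : IsLightlike t₂)
    (hdim : Module.finrank ℝ (Submodule.span ℝ ({u₁, u₂, u₃} : Set R42)) = 3)
    (horth : ∀ u ∈ ({u₁, u₂, u₃} : Set R42),
      bform u (s₁ + bform s₁ p • p) = 0 ∧
      bform u (t₁ + bform t₁ p • p) = 0 ∧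
      bform u (s₂ + bform s₂ p • p) = 0 ∧
      bform u (t₂ + bform t₂ p • p) = 0) :
    Module.finrank ℝ (Submodule.span ℝ ({s₁, s₂, t₁, t₂, p} : Set R42)) ≤ 4 :=
  stmt_13_general p s₁ t₁ s₂ t₂ u₁ u₂ u₃ hdim horth
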